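/- Given a four-valued assignment V₄ into {1,i,j,0}, define the two-world BDi3-model with worlds x ≤ y where at x an atom is true iff V₄(p)=1 and false iff V₄(p)=0, and at y an atom is true iff V₄(p) ∈ {1,i} and false otherwise. Then for every formula A: A is true at x iff I₄(A)=1; A is false at x iff I₄(A)=0; A is true at y iff I₄(A) ∈ {1,i}; A is false at y iff I₄(A) ∈ {j,0}. -/
import Mathlib


inductive Fm : Type where
  | atom : Nat → Fm
  | bot : Fm
  | snot : Fm → Fm
  | and : Fm → Fm → Fm
  | or : Fm → Fm → Fm
  | imp : Fm → Fm → Fm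
deriving DecidableEq

/-- Intuitionistic/Boolean negation `¬A := A → ⊥`. -/
def negFm (A : Fm) : Fm := Fm.imp A Fm.bot

/-- Biconditional `A ↔ B := (A→B) ∧ (B→A)`. -/
def iffFm (A B : Fm) : Fm := Fm.and (Fm.imp A B) (Fm.imp B A)

inductive FourVal : Type where
  | one : FourVal
  | i : FourVal
  | j : FourVal
  | zero : FourVal
deriving DecidableEq

def FourVal.rank : FourVal → Nat
  | .one => 3
  | .i => 2
  | .j => 1
  | .zero => 0

/-- Meet for the linear order 0 < j < i < 1. -/
def and4 (a b : FourVal) : FourVal := if a.rank ≤ b.rank then a else b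
/-- Join for the linear order 0 < j < i < 1. -/
def or4 (a b : FourVal) : FourVal := if a.rank ≤ b.rank then b else a

def imp4 : FourVal → FourVal → FourVal
  | .one, b => b
  | .i, .one => .one
  | .i, .i => .one
  | .i, .j => .j
  | .i, .zero => .zero
  | .j, _ => .one
  | .zero, _ => .one

def snot4 : FourVal → FourVal
  | .one => .zero
  | .i => .j
  | .j => .i
  | .zero => .one

/-- Four-valued interpretation extending an assignment. -/
def I4 (v : Nat → FourVal) : Fm → FourVal
  | .atom n => v n
  | .bot => .zero
  | .snot A => snot4 (I4 v A)
  | .and A B => and4 (I4 v A) (I4 v B)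
  | .or A B => or4 (I4 v A) (I4 v B)
  | .imp A B => imp4 (I4 v A) (I4 v B)

/-- The two-world BDi3-model (worlds `x ≤ y`) induced by a four-valued
assignment `v`: `tw v A = ((truth at x, falsity at x), (truth at y, falsity at y))`,
where an atom is true at `x` iff its value is 1, false at `x` iff its value is 0,
true at `y` iff its value is in {1,i}, and false at `y` otherwise. -/
def tw (v : Nat → FourVal) : Fm → (Prop × Prop) × (Prop × Prop)
  | .atom n => ((v n = FourVal.one, v n = FourVal.zero),
                (v n = FourVal.one ∨ v n = FourVal.i,
                 v n = FourVal.j ∨ v n = FourVal.zero))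
  | .bot => ((False, True), (False, True))
  | .snot A => (((tw v A).1.2, (tw v A).1.1), ((tw v A).2.2, (tw v A).2.1))
  | .and A B => (((tw v A).1.1 ∧ (tw v B).1.1, (tw v A).1.2 ∨ (tw v B).1.2),
                 ((tw v A).2.1 ∧ (tw v B).2.1, (tw v A).2.2 ∨ (tw v B).2.2))
  | .or A B => (((tw v A).1.1 ∨ (tw v B).1.1, (tw v A).1.2 ∧ (tw v B).1.2),
                ((tw v A).2.1 ∨ (tw v B).2.1, (tw v A).2.2 ∧ (tw v B).2.2))
  | .imp A B =>
      ((((tw v A).1.1 → (tw v B).1.1) ∧ ((tw v A).2.1 → (tw v B).2.1),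
        (¬ (tw v A).1.2 ∧ ¬ (tw v A).2.2) ∧ (tw v B).1.2),
       ((tw v A).2.1 → (tw v B).2.1, ¬ (tw v A).2.2 ∧ (tw v B).2.2))

/-- For every formula, truth/falsity at the two worlds of the induced model
match the four-valued interpretation as described. -/
theorem twoWorld_matches_fourValued (v : Nat → FourVal) (A : Fm) :
    ((tw v A).1.1 ↔ I4 v A = FourVal.one) ∧
    ((tw v A).1.2 ↔ I4 v A = FourVal.zero) ∧
    ((tw v A).2.1 ↔ (I4 v A = FourVal.one ∨ I4 v A = FourVal.i)) ∧
    ((tw v A).2.2 ↔ (I4 v A = FourVal.j ∨ I4 v A = FourVal.zero)) := by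
  induction A with
  | atom n =>
    rcases h : v n <;> simp [tw, I4, h]
  | bot => simp [tw, I4]
  | snot A ih =>
    obtain ⟨h1, h2, h3, h4⟩ := ih
    simp only [tw, I4, h1, h2, h3, h4]
    rcases hA : I4 v A <;> simp [snot4] <;> tauto
  | and A B ihA ihB =>
    obtain ⟨a1, a2, a3, a4⟩ := ihA
    obtain ⟨b1, b2, b3, b4⟩ := ihB
    simp only [tw, I4, a1, a2, a3, a4, b1, b2, b3, b4]
    rcases hA : I4 v A <;> rcases hB : I4 v B <;> simp [and4, FourVal.rank] <;> tauto
  | or A B ihA ihB =>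
    obtain ⟨a1, a2, a3, a4⟩ := ihA
    obtain ⟨b1, b2, b3, b4⟩ := ihB
    simp only [tw, I4, a1, a2, a3, a4, b1, b2, b3, b4]
    rcases hA : I4 v A <;> rcases hB : I4 v B <;> simp [or4, FourVal.rank] <;> tauto
  | imp A B ihA ihB =>
    obtain ⟨a1, a2, a3, a4⟩ := ihA
    obtain ⟨b1, b2, b3, b4⟩ := ihB
    simp only [tw, I4, a1, a2, a3, a4, b1, b2, b3, b4]
    rcases hA : I4 v A <;> rcases hB : I4 v B <;> simp [imp4] <;> tauto
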